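/- Let (V, l_∘, r_∘) be a representation of an anti-pre-Lie algebra (A, ∘). Then (V*, r_∘* - l_∘*, r_∘*) is a representation of (A, ∘), where f*(x) denotes the negative dual of f(x) acting on V*. -/

import Mathlib

/-!
Transposition `f ↦ f.dualMap` reverses products, so it is an algebra homomorphism
`(End V)ᵐᵒᵖ → End V*`. The defining identities of a representation make sense in any ring and are
preserved by ring homomorphisms, so it suffices to check that if `(l, r)` satisfies them in a ring
`R`, then `(op (l - r), op (-r))` satisfies them in `Rᵐᵒᵖ`. Unwinding `op`, each of these three
identities is a fixed integer combination of the original ones.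
-/

/-- A representation `(V, l, r)` of an anti-pre-Lie algebra `(A, ∘)`. -/
def IsAPLRep {k A V : Type*} [Field k] [AddCommGroup A] [Module k A]
    [AddCommGroup V] [Module k V]
    (c : A →ₗ[k] A →ₗ[k] A) (l r : A → Module.End k V) : Prop :=
  IsLinearMap k l ∧ IsLinearMap k r ∧
  (∀ x y, l (c y x) - l (c x y) = l x * l y - l y * l x) ∧
  (∀ x y, r (c x y) = l x * r y + r y * l x - r y * r x) ∧
  (∀ x y, l (c y x) - l (c x y) = r x * l y - r y * l x - r x * r y + r y * r x)

open MulOpposite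

structure APLRepLaws {A R : Type*} [Ring R] (c : A → A → A) (l r : A → R) : Prop where
  left_lie : ∀ x y, l (c y x) - l (c x y) = l x * l y - l y * l x
  right_mul : ∀ x y, r (c x y) = l x * r y + r y * l x - r y * r x
  mixed_lie : ∀ x y, l (c y x) - l (c x y) = r x * l y - r y * l x - r x * r y + r y * r x

namespace APLRepLaws

variable {A R S F : Type*} [Ring R] [Ring S] {c : A → A → A} {l r : A → R}

theorem map [FunLike F R S] [RingHomClass F R S] (h : APLRepLaws c l r) (f : F) :
    APLRepLaws c (fun x => f (l x)) (fun x => f (r x)) where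
  left_lie x y := by simpa only [map_sub, map_mul] using congrArg f (h.left_lie x y)
  right_mul x y := by simpa only [map_add, map_sub, map_mul] using congrArg f (h.right_mul x y)
  mixed_lie x y := by simpa only [map_add, map_sub, map_mul] using congrArg f (h.mixed_lie x y)

theorem op_sub_neg (h : APLRepLaws c l r) :
    APLRepLaws c (fun x => op (l x - r x)) (fun x => op (-r x)) where
  left_lie x y := by
    apply unop_injective
    simp only [unop_sub, unop_mul, unop_op]
    linear_combination (norm := noncomm_ring)
      -h.left_lie x y + h.right_mul x y - h.right_mul y x + 2 * h.mixed_lie x y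
  right_mul x y := by
    apply unop_injective
    simp only [unop_add, unop_sub, unop_mul, unop_op]
    linear_combination (norm := noncomm_ring) -h.right_mul x y
  mixed_lie x y := by
    apply unop_injective
    simp only [unop_add, unop_sub, unop_mul, unop_op]
    linear_combination (norm := noncomm_ring)
      h.right_mul x y - h.right_mul y x + h.mixed_lie x y

end APLRepLaws

theorem isAPLRep_iff {k A V : Type*} [Field k] [AddCommGroup A] [Module k A]
    [AddCommGroup V] [Module k V] {c : A →ₗ[k] A →ₗ[k] A} {l r : A → Module.End k V} :
    IsAPLRep c l r ↔ IsLinearMap k l ∧ IsLinearMap k r ∧ APLRepLaws (fun x y => c x y) l r :=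
  ⟨fun ⟨hl, hr, h₁, h₂, h₃⟩ => ⟨hl, hr, h₁, h₂, h₃⟩,
    fun ⟨hl, hr, h₁, h₂, h₃⟩ => ⟨hl, hr, h₁, h₂, h₃⟩⟩

def Module.End.dualMapAlgHom (k V : Type*) [CommSemiring k] [AddCommMonoid V] [Module k V] :
    (Module.End k V)ᵐᵒᵖ →ₐ[k] Module.End k (Module.Dual k V) where
  toFun f := f.unop.dualMap
  map_one' := LinearMap.dualMap_id
  map_mul' _ _ := rfl
  map_zero' := map_zero Module.Dual.transpose
  map_add' f g := map_add Module.Dual.transpose f.unop g.unop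
  commutes' _ := by ext; simp

/-- the dual representation `(V*, r* - l*, r*)` of a representation of an
anti-pre-Lie algebra, where `f*(x) = -(f x).dualMap`. -/
theorem aplRep_dual {k A V : Type*} [Field k] [AddCommGroup A] [Module k A]
    [AddCommGroup V] [Module k V]
    (c : A →ₗ[k] A →ₗ[k] A) (l r : A → Module.End k V)
    (h : IsAPLRep c l r) :
    IsAPLRep (V := Module.Dual k V) c
      (fun x => (l x).dualMap - (r x).dualMap)
      (fun x => -((r x).dualMap)) := by
  obtain ⟨hl, hr, hlaws⟩ := isAPLRep_iff.mp h
  have hl' : (fun x => (l x).dualMap - (r x).dualMap) =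
      fun x => Module.End.dualMapAlgHom k V (op (l x - r x)) :=
    funext fun x => by rw [op_sub, map_sub]; rfl
  have hr' : (fun x => -(r x).dualMap) = fun x => Module.End.dualMapAlgHom k V (op (-r x)) :=
    funext fun x => by rw [op_neg, map_neg]; rfl
  rw [isAPLRep_iff, hl', hr']
  exact ⟨(Module.Dual.transpose ∘ₗ (hl.mk' l - hr.mk' r)).isLinear,
    (Module.Dual.transpose ∘ₗ (-hr.mk' r)).isLinear,
    hlaws.op_sub_neg.map (Module.End.dualMapAlgHom k V)⟩
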